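/- arXiv:2412.20560 — 8 statements merged into one kernel-verified Lean document; each statement's English description precedes it below -/
import Mathlib

section
/- Let (X,d) be a metric space, M a nonempty proper closed subset of X, and F : X∖M → (0,∞) a 1-Lipschitz function. Then the function j defined by j(x,y) = (1/2)·log((1 + d(x,y)/F(x))·(1 + d(x,y)/F(y))) for x,y ∈ X∖M is a metric on X∖M (it is nonnegative, vanishes exactly on the diagonal, is symmetric, and satisfies the triangle inequality). -/
open Real Filter

/-- Generalized Gehring–Osgood function. -/
noncomputable def jGO {X : Type*} [MetricSpace X] (F : X → ℝ) (x y : X) : ℝ :=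
  (1 / 2) * Real.log ((1 + dist x y / F x) * (1 + dist x y / F y))

lemma jGO_key {fx fz a b c : ℝ} (hfx : 0 < fx) (hfz : 0 < fz)
    (hlip : fz ≤ fx + a) (hb : 0 ≤ b) (hc : c ≤ a + b) :
    1 + c / fx ≤ (1 + a / fx) * (1 + b / fz) := by
  have key : (1 + c / fx) * (fx * fz) ≤ ((1 + a / fx) * (1 + b / fz)) * (fx * fz) := by
    have e1 : (1 + c / fx) * (fx * fz) = (fx + c) * fz := by
      field_simp
    have e2 : ((1 + a / fx) * (1 + b / fz)) * (fx * fz) = (fx + a) * (fz + b) := by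
      field_simp
    rw [e1, e2]
    nlinarith
  exact le_of_mul_le_mul_right key (by positivity)

theorem stmt_0 {X : Type*} [MetricSpace X] (M : Set X)
    (hMclosed : IsClosed M) (hMne : M.Nonempty) (hMproper : M ≠ Set.univ)
    (F : X → ℝ) (hFpos : ∀ x ∉ M, 0 < F x)
    (hFlip : ∀ x ∉ M, ∀ y ∉ M, |F x - F y| ≤ dist x y) :
    (∀ x ∉ M, ∀ y ∉ M, 0 ≤ jGO F x y) ∧
    (∀ x ∉ M, ∀ y ∉ M, (jGO F x y = 0 ↔ x = y)) ∧
    (∀ x ∉ M, ∀ y ∉ M, jGO F x y = jGO F y x) ∧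
    (∀ x ∉ M, ∀ y ∉ M, ∀ z ∉ M, jGO F x y ≤ jGO F x z + jGO F z y) := by
  have hone : ∀ x ∉ M, ∀ y ∉ M, (1:ℝ) ≤ (1 + dist x y / F x) * (1 + dist x y / F y) := by
    intro x hx y hy
    have hfx := hFpos x hx
    have hfy := hFpos y hy
    have hd : (0:ℝ) ≤ dist x y := dist_nonneg
    nlinarith [div_nonneg hd hfx.le, div_nonneg hd hfy.le]
  refine ⟨?_, ?_, ?_, ?_⟩
  · intro x hx y hy
    have := hone x hx y hy
    unfold jGO
    have : (0:ℝ) ≤ Real.log ((1 + dist x y / F x) * (1 + dist x y / F y)) :=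
      Real.log_nonneg this
    linarith
  · intro x hx y hy
    constructor
    · intro h
      unfold jGO at h
      have hlog : Real.log ((1 + dist x y / F x) * (1 + dist x y / F y)) = 0 := by linarith
      have hfx := hFpos x hx
      have hfy := hFpos y hy
      have hd : (0:ℝ) ≤ dist x y := dist_nonneg
      by_contra hne
      have hdpos : 0 < dist x y := dist_pos.mpr hne
      have h1 : (1:ℝ) < (1 + dist x y / F x) * (1 + dist x y / F y) := by
        nlinarith [div_pos hdpos hfx, div_pos hdpos hfy, div_nonneg hd hfy.le]
      have := Real.log_pos h1
      linarith
    · rintro rfl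
      unfold jGO
      simp
  · intro x hx y hy
    unfold jGO
    rw [dist_comm, mul_comm (1 + dist y x / F x)]
  · intro x hx y hy z hz
    have hfx := hFpos x hx
    have hfy := hFpos y hy
    have hfz := hFpos z hz
    have hA : 1 + dist x y / F x ≤ (1 + dist x z / F x) * (1 + dist z y / F z) := by
      apply jGO_key hfx hfz _ dist_nonneg (dist_triangle x z y)
      have := abs_le.mp (hFlip z hz x hx)
      rw [dist_comm z x] at this
      linarith [this.2]
    have hB : 1 + dist x y / F y ≤ (1 + dist z y / F y) * (1 + dist x z / F z) := by
      rw [dist_comm x y, dist_comm z y, dist_comm x z]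
      apply jGO_key hfy hfz _ dist_nonneg (dist_triangle y z x)
      have := hFlip z hz y hy
      have := abs_le.mp this
      rw [dist_comm]
      linarith [this.2]
    have pos1 : (0:ℝ) < 1 + dist x y / F x := by positivity
    have pos2 : (0:ℝ) < 1 + dist x y / F y := by positivity
    have pos3 : (0:ℝ) < 1 + dist x z / F x := by positivity
    have pos4 : (0:ℝ) < 1 + dist x z / F z := by positivity
    have pos5 : (0:ℝ) < 1 + dist z y / F z := by positivity
    have pos6 : (0:ℝ) < 1 + dist z y / F y := by positivity
    unfold jGO
    rw [← mul_add]
    apply mul_le_mul_of_nonneg_left _ (by norm_num)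
    rw [← Real.log_mul (by positivity) (by positivity)]
    apply Real.log_le_log (by positivity)
    calc (1 + dist x y / F x) * (1 + dist x y / F y)
        ≤ ((1 + dist x z / F x) * (1 + dist z y / F z)) *
          ((1 + dist z y / F y) * (1 + dist x z / F z)) :=
          mul_le_mul hA hB pos2.le (by positivity)
      _ = (1 + dist x z / F x) * (1 + dist x z / F z) *
          ((1 + dist z y / F z) * (1 + dist z y / F y)) := by ring
end

section
/- Let (X,d) be a metric space, M a nonempty proper closed subset of X, F : X∖M → (0,∞) a 1-Lipschitz function, and j(x,y) = (1/2)·log((1 + d(x,y)/F(x))·(1 + d(x,y)/F(y))) the generalized Gehring–Osgood metric on X∖M. Then the identity map 1 : (X∖M, d) → (X∖M, j) is a homeomorphism, and it is 1-quasiconformal: for every x ∈ X∖M, limsup_{r→0⁺} [ sup{ j(x,y) : y ∈ X∖M, d(x,y) ≤ r } / inf{ j(x,y) : y ∈ X∖M, d(x,y) ≥ r } ] ≤ 1. -/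
open Real Filter

/-!
Write `s = d(x, y)` and `a = F x`. The Lipschitz bound `a - s ≤ F y ≤ a + s` squeezes the product
defining `j(x, y)` between `1 + 2s/a` and `(a + s)/(a - s) = 1 + 2s/(a - s)`, so that, by
`t/(1 + t) ≤ log(1 + t) ≤ t`, we get `s/(a + 2s) ≤ j(x, y) ≤ s/(a - s)`. Both bounds increase with
`s`, hence the ratio in the quasiconformality condition at scale `r` is at most
`(a + 2r)/(a - r) → 1`; the same bounds show that `j(u n, x) → 0` if and only if `d(u n, x) → 0`.
-/

open Topology

section GehringOsgood

variable {X : Type*} [MetricSpace X] {F : X → ℝ} {x y : X}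

lemma jGO_comm (F : X → ℝ) (x y : X) : jGO F x y = jGO F y x := by
  rw [jGO, jGO, dist_comm, mul_comm (1 + dist y x / F x)]

lemma jGO_nonneg (hx : 0 < F x) (hy : 0 < F y) : 0 ≤ jGO F x y := by
  have h : 1 ≤ (1 + dist x y / F x) * (1 + dist x y / F y) :=
    one_le_mul_of_one_le_of_one_le (le_add_of_nonneg_right (by positivity))
      (le_add_of_nonneg_right (by positivity))
  unfold jGO
  have := log_nonneg h
  positivity

lemma jGO_le_dist_div_sub_dist (hs : dist x y < F x) (hlip : |F x - F y| ≤ dist x y) :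
    jGO F x y ≤ dist x y / (F x - dist x y) := by
  have hx : 0 < F x := dist_nonneg.trans_lt hs
  have hsub : 0 < F x - dist x y := sub_pos.2 hs
  have hFy : F x - dist x y ≤ F y := by linarith [(abs_le.1 hlip).2]
  have hy : 0 < F y := hsub.trans_le hFy
  have hP : (1 + dist x y / F x) * (1 + dist x y / F y) ≤
      1 + 2 * (dist x y / (F x - dist x y)) :=
    calc _ ≤ (1 + dist x y / F x) * (1 + dist x y / (F x - dist x y)) := by gcongr
      _ = _ := by field_simp; ring
  have hlog := log_le_sub_one_of_pos (x := (1 + dist x y / F x) * (1 + dist x y / F y))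
    (by positivity)
  unfold jGO
  linarith

lemma log_one_add_two_mul_dist_div_le (hx : 0 < F x) (hy : 0 < F y)
    (hlip : |F x - F y| ≤ dist x y) :
    log (1 + 2 * dist x y / F x) ≤ 2 * jGO F x y := by
  have hFy : F y ≤ F x + dist x y := by linarith [(abs_le.1 hlip).1]
  have hP : 1 + 2 * dist x y / F x ≤ (1 + dist x y / F x) * (1 + dist x y / F y) :=
    calc _ = (1 + dist x y / F x) * (1 + dist x y / (F x + dist x y)) := by field_simp; ring
      _ ≤ _ := by gcongr
  unfold jGO
  linarith [log_le_log (by positivity) hP]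

lemma dist_div_add_two_mul_dist_le_jGO (hx : 0 < F x) (hy : 0 < F y)
    (hlip : |F x - F y| ≤ dist x y) :
    dist x y / (F x + 2 * dist x y) ≤ jGO F x y := by
  have h := one_sub_inv_le_log_of_pos (x := 1 + 2 * dist x y / F x) (by positivity)
  have h' : 1 - (1 + 2 * dist x y / F x)⁻¹ = 2 * (dist x y / (F x + 2 * dist x y)) := by
    field_simp; ring
  linarith [log_one_add_two_mul_dist_div_le hx hy hlip]


section Sequences

variable {ι : Type*} {l : Filter ι} {u : ι → X}

lemma tendsto_jGO_of_tendsto_dist (hx : 0 < F x) (hu : ∀ i, 0 < F (u i))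
    (hlip : ∀ i, |F x - F (u i)| ≤ dist x (u i))
    (h : Tendsto (fun i => dist (u i) x) l (𝓝 0)) :
    Tendsto (fun i => jGO F (u i) x) l (𝓝 0) := by
  have hbound : Tendsto (fun i => dist (u i) x / (F x - dist (u i) x)) l (𝓝 (0 / (F x - 0))) :=
    h.div (tendsto_const_nhds.sub h) (by simpa using hx.ne')
  rw [zero_div] at hbound
  refine squeeze_zero' (.of_forall fun i => jGO_nonneg (hu i) hx) ?_ hbound
  filter_upwards [h (Iio_mem_nhds hx)] with i hi
  rw [jGO_comm, dist_comm]
  exact jGO_le_dist_div_sub_dist ((dist_comm _ _).trans_lt hi) (hlip i)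

lemma tendsto_dist_of_tendsto_jGO (hx : 0 < F x) (hu : ∀ i, 0 < F (u i))
    (hlip : ∀ i, |F x - F (u i)| ≤ dist x (u i))
    (h : Tendsto (fun i => jGO F (u i) x) l (𝓝 0)) :
    Tendsto (fun i => dist (u i) x) l (𝓝 0) := by
  have hbound : Tendsto (fun i => F x / 2 * (exp (2 * jGO F (u i) x) - 1)) l (𝓝 0) := by
    simpa using ((h.const_mul 2).rexp.sub_const 1).const_mul (F x / 2)
  refine squeeze_zero (fun _ => dist_nonneg) (fun i => ?_) hbound
  have hlog := log_one_add_two_mul_dist_div_le hx (hu i) (hlip i)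
  rw [log_le_iff_le_exp (by positivity), ← jGO_comm] at hlog
  calc dist (u i) x = F x / 2 * (2 * dist x (u i) / F x) := by rw [dist_comm]; field_simp
    _ ≤ F x / 2 * (exp (2 * jGO F (u i) x) - 1) := by gcongr; linarith

end Sequences

section Ratio

variable {M : Set X}

lemma sSup_jGO_le (hx : x ∉ M) (hlip : ∀ y ∉ M, |F x - F y| ≤ dist x y) {r : ℝ}
    (hr : 0 ≤ r) (hra : r < F x) :
    sSup (jGO F x '' {y | y ∉ M ∧ dist x y ≤ r}) ≤ r / (F x - r) := by
  refine csSup_le ⟨_, Set.mem_image_of_mem _ ⟨hx, by simpa using hr⟩⟩ ?_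
  rintro _ ⟨y, ⟨hy, hyr⟩, rfl⟩
  have hsub : 0 < F x - r := sub_pos.2 hra
  calc jGO F x y ≤ dist x y / (F x - dist x y) :=
        jGO_le_dist_div_sub_dist (hyr.trans_lt hra) (hlip y hy)
    _ ≤ r / (F x - r) := by gcongr

lemma le_sInf_jGO (hx : x ∉ M) (hFpos : ∀ y ∉ M, 0 < F y)
    (hlip : ∀ y ∉ M, |F x - F y| ≤ dist x y) {r : ℝ} (hr : 0 ≤ r)
    (hne : {y | y ∉ M ∧ r ≤ dist x y}.Nonempty) :
    r / (F x + 2 * r) ≤ sInf (jGO F x '' {y | y ∉ M ∧ r ≤ dist x y}) := by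
  have hFx := hFpos x hx
  refine le_csInf (hne.image _) ?_
  rintro _ ⟨y, ⟨hy, hry⟩, rfl⟩
  calc r / (F x + 2 * r) ≤ dist x y / (F x + 2 * dist x y) := by
        rw [div_le_div_iff₀ (by positivity) (by positivity)]
        nlinarith
    _ ≤ jGO F x y := dist_div_add_two_mul_dist_le_jGO hFx (hFpos y hy) (hlip y hy)

lemma sSup_div_sInf_jGO_nonneg (hx : x ∉ M) (hFpos : ∀ y ∉ M, 0 < F y) (r : ℝ) :
    0 ≤ sSup (jGO F x '' {y | y ∉ M ∧ dist x y ≤ r}) /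
      sInf (jGO F x '' {y | y ∉ M ∧ r ≤ dist x y}) := by
  have hnn : ∀ p : X → Prop, ∀ b ∈ jGO F x '' {y | y ∉ M ∧ p y}, 0 ≤ b := by
    rintro p _ ⟨y, ⟨hy, -⟩, rfl⟩
    exact jGO_nonneg (hFpos x hx) (hFpos y hy)
  exact div_nonneg (Real.sSup_nonneg (hnn _)) (Real.sInf_nonneg (hnn _))

lemma sSup_div_sInf_jGO_le (hx : x ∉ M) (hFpos : ∀ y ∉ M, 0 < F y)
    (hlip : ∀ y ∉ M, |F x - F y| ≤ dist x y) {r : ℝ} (hr : 0 < r) (hra : r < F x) :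
    sSup (jGO F x '' {y | y ∉ M ∧ dist x y ≤ r}) /
      sInf (jGO F x '' {y | y ∉ M ∧ r ≤ dist x y}) ≤ (F x + 2 * r) / (F x - r) := by
  have hFx := hFpos x hx
  have hsub : 0 < F x - r := sub_pos.2 hra
  rcases Set.eq_empty_or_nonempty {y | y ∉ M ∧ r ≤ dist x y} with hempty | hne
  · rw [hempty, Set.image_empty, Real.sInf_empty, div_zero]
    positivity
  calc _ ≤ r / (F x - r) / (r / (F x + 2 * r)) :=
        div_le_div₀ (by positivity) (sSup_jGO_le hx hlip hr.le hra) (by positivity)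
          (le_sInf_jGO hx hFpos hlip hr.le hne)
    _ = (F x + 2 * r) / (F x - r) := by field_simp

end Ratio

lemma tendsto_add_two_mul_div_sub_nhdsGT {a : ℝ} (ha : a ≠ 0) :
    Tendsto (fun r => (a + 2 * r) / (a - r)) (𝓝[>] 0) (𝓝 1) := by
  have h : Tendsto (fun r => (a + 2 * r) / (a - r)) (𝓝 0) (𝓝 ((a + 2 * 0) / (a - 0))) :=
    (tendsto_const_nhds.add (tendsto_id.const_mul 2)).div (tendsto_const_nhds.sub tendsto_id)
      (by simpa using ha)
  rw [mul_zero, add_zero, sub_zero, div_self ha] at h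
  exact h.mono_left nhdsWithin_le_nhds

end GehringOsgood

theorem stmt_4_general {X : Type*} [MetricSpace X] (M : Set X)
    (F : X → ℝ) (hFpos : ∀ x ∉ M, 0 < F x)
    (hFlip : ∀ x ∉ M, ∀ y ∉ M, |F x - F y| ≤ dist x y) :
    -- the identity map `(X∖M, d) → (X∖M, j)` is a homeomorphism
    (∀ x ∉ M, ∀ u : ℕ → X, (∀ n, u n ∉ M) →
      (Tendsto (fun n => dist (u n) x) atTop (nhds 0) ↔
        Tendsto (fun n => jGO F (u n) x) atTop (nhds 0))) ∧
    -- and it is 1-quasiconformal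
    (∀ x ∉ M,
      Filter.limsup
        (fun r : ℝ =>
          sSup ((fun y => jGO F x y) '' {y | y ∉ M ∧ dist x y ≤ r}) /
          sInf ((fun y => jGO F x y) '' {y | y ∉ M ∧ r ≤ dist x y}))
        (nhdsWithin (0 : ℝ) (Set.Ioi 0)) ≤ 1) := by
  refine ⟨fun x hx u hu => ?_, fun x hx => ?_⟩
  · have hFu n : 0 < F (u n) := hFpos _ (hu n)
    have hlip n : |F x - F (u n)| ≤ dist x (u n) := hFlip x hx _ (hu n)
    exact ⟨tendsto_jGO_of_tendsto_dist (hFpos x hx) hFu hlip,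
      tendsto_dist_of_tendsto_jGO (hFpos x hx) hFu hlip⟩
  · have hg := tendsto_add_two_mul_div_sub_nhdsGT (hFpos x hx).ne'
    have hle : ∀ᶠ r in 𝓝[>] 0,
        sSup (jGO F x '' {y | y ∉ M ∧ dist x y ≤ r}) /
          sInf (jGO F x '' {y | y ∉ M ∧ r ≤ dist x y}) ≤ (F x + 2 * r) / (F x - r) := by
      filter_upwards [Ioo_mem_nhdsGT (hFpos x hx)] with r ⟨hr, hra⟩
      exact sSup_div_sInf_jGO_le hx hFpos (hFlip x hx) hr hra
    have hcobdd := (isBoundedUnder_of (f := 𝓝[>] (0 : ℝ))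
      ⟨0, sSup_div_sInf_jGO_nonneg hx hFpos⟩).isCoboundedUnder_le
    calc _ ≤ limsup (fun r => (F x + 2 * r) / (F x - r)) (𝓝[>] 0) :=
          limsup_le_limsup hle hcobdd hg.isBoundedUnder_le
      _ = 1 := hg.limsup_eq

theorem stmt_4 {X : Type*} [MetricSpace X] (M : Set X)
    (hMclosed : IsClosed M) (hMne : M.Nonempty) (hMproper : M ≠ Set.univ)
    (F : X → ℝ) (hFpos : ∀ x ∉ M, 0 < F x)
    (hFlip : ∀ x ∉ M, ∀ y ∉ M, |F x - F y| ≤ dist x y) :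
    -- the identity map `(X∖M, d) → (X∖M, j)` is a homeomorphism
    (∀ x ∉ M, ∀ u : ℕ → X, (∀ n, u n ∉ M) →
      (Tendsto (fun n => dist (u n) x) atTop (nhds 0) ↔
        Tendsto (fun n => jGO F (u n) x) atTop (nhds 0))) ∧
    -- and it is 1-quasiconformal
    (∀ x ∉ M,
      Filter.limsup
        (fun r : ℝ =>
          sSup ((fun y => jGO F x y) '' {y | y ∉ M ∧ dist x y ≤ r}) /
          sInf ((fun y => jGO F x y) '' {y | y ∉ M ∧ r ≤ dist x y}))
        (nhdsWithin (0 : ℝ) (Set.Ioi 0)) ≤ 1) :=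
  stmt_4_general M F hFpos hFlip
end

section
/- Let (X,d) be a metric space, M a nonempty proper closed subset of X, F : X∖M → (0,∞) a 1-Lipschitz function, and c ≥ 2 a real constant. Then the function h_c defined by h_c(x,y) = log(1 + c·d(x,y)/√(F(x)·F(y))) for x,y ∈ X∖M is a metric on X∖M. -/
open Real Filter

/-- Generalized Dovgoshey–Hariri–Vuorinen function. -/
noncomputable def hDHV {X : Type*} [MetricSpace X] (c : ℝ) (F : X → ℝ) (x y : X) : ℝ :=
  Real.log (1 + c * dist x y / Real.sqrt (F x * F y))

private lemma sq_le_imp (s t : ℝ) (hs : 0 ≤ s) (h : t ^ 2 ≤ s ^ 2) : t ≤ s := by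
  nlinarith [sq_nonneg (s - t), sq_nonneg (s + t)]

private lemma key_ineq (a b fx fy fz : ℝ) (ha : 0 ≤ a) (hb : 0 ≤ b)
    (hfx : 0 < fx) (hfy : 0 < fy) (hfz : 0 < fz)
    (h1 : fz ≤ fx + a) (h2 : fz ≤ fy + b) :
    (a + b) * fz ≤ a * Real.sqrt (fy * fz) + b * Real.sqrt (fx * fz) + 2 * a * b := by
  set sy := Real.sqrt (fy * fz) with hsy
  set sx := Real.sqrt (fx * fz) with hsx
  have hsy0 : 0 ≤ sy := Real.sqrt_nonneg _
  have hsx0 : 0 ≤ sx := Real.sqrt_nonneg _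
  have hsy2 : sy ^ 2 = fy * fz := Real.sq_sqrt (by positivity)
  have hsx2 : sx ^ 2 = fx * fz := Real.sq_sqrt (by positivity)
  rcases le_total b fz with hbfz | hbfz <;> rcases le_total a fz with hafz | hafz
  · -- b ≤ fz, a ≤ fz
    have hy : fz - b ≤ sy := by
      apply sq_le_imp _ _ hsy0
      nlinarith
    have hx : fz - a ≤ sx := by
      apply sq_le_imp _ _ hsx0
      nlinarith
    nlinarith [mul_le_mul_of_nonneg_left hy ha, mul_le_mul_of_nonneg_left hx hb]
  · -- b ≤ fz, fz ≤ a
    have hy : fz - b ≤ sy := by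
      apply sq_le_imp _ _ hsy0
      nlinarith
    nlinarith [mul_le_mul_of_nonneg_left hy ha, mul_nonneg hb hsx0,
      mul_le_mul_of_nonneg_left hafz hb]
  · -- a ≤ fz, fz ≤ b
    have hx : fz - a ≤ sx := by
      apply sq_le_imp _ _ hsx0
      nlinarith
    nlinarith [mul_le_mul_of_nonneg_left hx hb, mul_nonneg ha hsy0,
      mul_le_mul_of_nonneg_left hbfz ha]
  · -- fz ≤ a, fz ≤ b
    nlinarith [mul_nonneg ha hsy0, mul_nonneg hb hsx0, mul_nonneg (sub_nonneg.2 hafz) (sub_nonneg.2 hbfz)]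

theorem stmt_5 {X : Type*} [MetricSpace X] (M : Set X)
    (hMclosed : IsClosed M) (hMne : M.Nonempty) (hMproper : M ≠ Set.univ)
    (F : X → ℝ) (hFpos : ∀ x ∉ M, 0 < F x)
    (hFlip : ∀ x ∉ M, ∀ y ∉ M, |F x - F y| ≤ dist x y)
    (c : ℝ) (hc : 2 ≤ c) :
    (∀ x ∉ M, ∀ y ∉ M, 0 ≤ hDHV c F x y) ∧
    (∀ x ∉ M, ∀ y ∉ M, (hDHV c F x y = 0 ↔ x = y)) ∧
    (∀ x ∉ M, ∀ y ∉ M, hDHV c F x y = hDHV c F y x) ∧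
    (∀ x ∉ M, ∀ y ∉ M, ∀ z ∉ M, hDHV c F x y ≤ hDHV c F x z + hDHV c F z y) := by
  have hc0 : 0 < c := by linarith
  -- nonnegativity of the argument u := c * dist x y / sqrt (F x * F y)
  have harg : ∀ x ∉ M, ∀ y ∉ M, 0 ≤ c * dist x y / Real.sqrt (F x * F y) := by
    intro x hx y hy
    exact div_nonneg (mul_nonneg hc0.le dist_nonneg) (Real.sqrt_nonneg _)
  refine ⟨?_, ?_, ?_, ?_⟩
  · intro x hx y hy
    exact Real.log_nonneg (by linarith [harg x hx y hy])
  · intro x hx y hy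
    have hs : 0 < Real.sqrt (F x * F y) :=
      Real.sqrt_pos.2 (mul_pos (hFpos x hx) (hFpos y hy))
    constructor
    · intro h
      have h1 : 1 + c * dist x y / Real.sqrt (F x * F y) = 1 := by
        rcases Real.log_eq_zero.1 h with h' | h' | h'
        · linarith [harg x hx y hy]
        · exact h'
        · linarith [harg x hx y hy]
      have h2 : c * dist x y / Real.sqrt (F x * F y) = 0 := by linarith
      have h3 : c * dist x y = 0 := by
        rcases div_eq_zero_iff.1 h2 with h' | h'
        · exact h'
        · exact absurd h' (ne_of_gt hs)
      have : dist x y = 0 := by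
        rcases mul_eq_zero.1 h3 with h | h
        · exact absurd h (ne_of_gt hc0)
        · exact h
      exact dist_eq_zero.1 this
    · intro h
      subst h
      simp [hDHV]
  · intro x hx y hy
    unfold hDHV
    rw [dist_comm, mul_comm (F x)]
  · intro x hx y hy z hz
    unfold hDHV
    set a := dist x z with hadef
    set b := dist z y with hbdef
    set D := dist x y with hDdef
    have ha : 0 ≤ a := dist_nonneg
    have hb : 0 ≤ b := dist_nonneg
    have hD : D ≤ a + b := dist_triangle x z y
    have hfx := hFpos x hx
    have hfy := hFpos y hy
    have hfz := hFpos z hz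
    have h1 : F z ≤ F x + a := by
      have := abs_le.1 (hFlip x hx z hz)
      linarith [this.1]
    have h2 : F z ≤ F y + b := by
      have := abs_le.1 (hFlip z hz y hy)
      linarith [this.2]
    set sxy := Real.sqrt (F x * F y) with hsxy
    set sxz := Real.sqrt (F x * F z) with hsxz
    set szy := Real.sqrt (F z * F y) with hszy
    have hsxy0 : 0 < sxy := Real.sqrt_pos.2 (by positivity)
    have hsxz0 : 0 < sxz := Real.sqrt_pos.2 (by positivity)
    have hszy0 : 0 < szy := Real.sqrt_pos.2 (by positivity)
    have hsxy2 : sxy ^ 2 = F x * F y := Real.sq_sqrt (by positivity)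
    have hsxz2 : sxz ^ 2 = F x * F z := Real.sq_sqrt (by positivity)
    have hszy2 : szy ^ 2 = F z * F y := Real.sq_sqrt (by positivity)
    have hprod : sxz * szy = F z * sxy := by
      rw [hsxz, hszy, hsxy, ← Real.sqrt_mul (by positivity),
        show F x * F z * (F z * F y) = F z ^ 2 * (F x * F y) by ring,
        Real.sqrt_mul (sq_nonneg _), Real.sqrt_sq hfz.le]
    -- key numeric inequality
    have hkey : (a + b) * F z ≤ a * Real.sqrt (F y * F z) + b * Real.sqrt (F x * F z) + 2 * a * b :=
      key_ineq a b (F x) (F y) (F z) ha hb hfx hfy hfz h1 h2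
    have hyz_comm : Real.sqrt (F y * F z) = szy := by rw [hszy, mul_comm]
    rw [hyz_comm] at hkey
    -- main inequality before logs
    have hmain : 1 + c * D / sxy ≤ (1 + c * a / sxz) * (1 + c * b / szy) := by
      have hnum : c * D * F z ≤ c * a * szy + c * b * sxz + c * c * a * b := by
        nlinarith [mul_le_mul_of_nonneg_left hkey hc0.le,
          mul_le_mul_of_nonneg_right hD (mul_pos hc0 hfz).le,
          mul_nonneg (mul_nonneg hc0.le ha) hb]
      have hexp : (1 + c * a / sxz) * (1 + c * b / szy)
          = 1 + (c * a * szy + c * b * sxz + c * c * a * b) / (sxz * szy) := by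
        field_simp
        ring
      rw [hexp, hprod]
      have : c * D / sxy = c * D * F z / (F z * sxy) := by
        field_simp
      rw [this]
      have hd : (0:ℝ) < F z * sxy := by positivity
      gcongr
    have hA : (0:ℝ) < 1 + c * D / sxy := by
      have := harg x hx y hy
      rw [← hsxy, ← hDdef] at this
      linarith
    have hB : (0:ℝ) < 1 + c * a / sxz := by
      have : (0:ℝ) ≤ c * a / sxz := by positivity
      linarith
    have hC : (0:ℝ) < 1 + c * b / szy := by
      have : (0:ℝ) ≤ c * b / szy := by positivity
      linarith
    calc Real.log (1 + c * D / sxy)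
        ≤ Real.log ((1 + c * a / sxz) * (1 + c * b / szy)) := Real.log_le_log hA hmain
      _ = Real.log (1 + c * a / sxz) + Real.log (1 + c * b / szy) :=
          Real.log_mul (ne_of_gt hB) (ne_of_gt hC)
end

section
/- Let (X,d) be a metric space, G ⊂ X an open set with nonempty boundary ∂G, and c ≥ 2 a real constant. Then the Dovgoshey–Hariri–Vuorinen function h_{G,c}(x,y) = log(1 + c·d(x,y)/√(δ(x)·δ(y))), where δ(x) = dist(x, ∂G), is a metric on G. -/
open Real Filter

/-- The Dovgoshey–Hariri–Vuorinen function associated to an open set `G`,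
where `δ(x) = dist(x, ∂G)`. -/
noncomputable def hDHVG {X : Type*} [MetricSpace X] (G : Set X) (c : ℝ) (x y : X) : ℝ :=
  Real.log (1 + c * dist x y /
    Real.sqrt (Metric.infDist x (frontier G) * Metric.infDist y (frontier G)))

private lemma sqrt_bound (T Q b : ℝ) (hT : 0 < T) (hQ : 0 < Q) (hb : 0 ≤ b)
    (h : T ^ 2 ≤ Q ^ 2 + b) : T ^ 2 ≤ Q * T + b := by
  rcases le_total T Q with h1 | h1
  · nlinarith
  · nlinarith

private lemma core (P Q T a b c d : ℝ) (hP : 0 < P) (hQ : 0 < Q) (hT : 0 < T)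
    (ha : 0 ≤ a) (hb : 0 ≤ b) (hc : 2 ≤ c) (hdab : d ≤ a + b)
    (hu : T ^ 2 ≤ P ^ 2 + a) (hv : T ^ 2 ≤ Q ^ 2 + b) :
    1 + c * d / (P * Q) ≤ (1 + c * a / (P * T)) * (1 + c * b / (T * Q)) := by
  have h1 : T ^ 2 ≤ P * T + a := sqrt_bound T P a hT hP ha hu
  have h2 : T ^ 2 ≤ Q * T + b := sqrt_bound T Q b hT hQ hb hv
  have key : d * T ^ 2 ≤ b * P * T + a * Q * T + c * a * b := by
    have ha1 : a * T ^ 2 ≤ a * (Q * T + b) := mul_le_mul_of_nonneg_left h2 ha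
    have hb1 : b * T ^ 2 ≤ b * (P * T + a) := mul_le_mul_of_nonneg_left h1 hb
    have hd1 : d * T ^ 2 ≤ (a + b) * T ^ 2 :=
      mul_le_mul_of_nonneg_right hdab (by positivity)
    nlinarith [mul_nonneg ha hb]
  rw [← sub_nonneg]
  have hPQ : (P * Q) ≠ 0 := by positivity
  have hPT : (P * T) ≠ 0 := by positivity
  have hTQ : (T * Q) ≠ 0 := by positivity
  have expand : (1 + c * a / (P * T)) * (1 + c * b / (T * Q)) - (1 + c * d / (P * Q))
      = c * ((b * P * T + a * Q * T + c * a * b) - d * T ^ 2) / (P * Q * T ^ 2) := by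
    field_simp
    ring
  rw [expand]
  exact div_nonneg (mul_nonneg (by linarith : (0:ℝ) ≤ c) (by linarith)) (by positivity)

theorem stmt_6 {X : Type*} [MetricSpace X] (G : Set X)
    (hG : IsOpen G) (hGb : (frontier G).Nonempty)
    (c : ℝ) (hc : 2 ≤ c) :
    (∀ x ∈ G, ∀ y ∈ G, 0 ≤ hDHVG G c x y) ∧
    (∀ x ∈ G, ∀ y ∈ G, (hDHVG G c x y = 0 ↔ x = y)) ∧
    (∀ x ∈ G, ∀ y ∈ G, hDHVG G c x y = hDHVG G c y x) ∧
    (∀ x ∈ G, ∀ y ∈ G, ∀ z ∈ G, hDHVG G c x y ≤ hDHVG G c x z + hDHVG G c z y) := by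
  have hc0 : (0:ℝ) < c := by linarith
  have hδ : ∀ x ∈ G, 0 < Metric.infDist x (frontier G) := by
    intro x hx
    refine (isClosed_frontier.notMem_iff_infDist_pos hGb).1 ?_
    rw [hG.frontier_eq]
    exact fun h => h.2 hx
  have harg : ∀ x ∈ G, ∀ y ∈ G, 0 ≤ c * dist x y /
      Real.sqrt (Metric.infDist x (frontier G) * Metric.infDist y (frontier G)) := by
    intro x hx y hy
    positivity
  refine ⟨?_, ?_, ?_, ?_⟩
  · intro x hx y hy
    exact Real.log_nonneg (by linarith [harg x hx y hy])
  · intro x hx y hy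
    have h1 : (0:ℝ) < 1 + c * dist x y /
        Real.sqrt (Metric.infDist x (frontier G) * Metric.infDist y (frontier G)) := by
      linarith [harg x hx y hy]
    have hs : 0 < Real.sqrt (Metric.infDist x (frontier G) * Metric.infDist y (frontier G)) :=
      Real.sqrt_pos.2 (mul_pos (hδ x hx) (hδ y hy))
    constructor
    · intro h
      unfold hDHVG at h
      have : (1:ℝ) + c * dist x y /
          Real.sqrt (Metric.infDist x (frontier G) * Metric.infDist y (frontier G)) = 1 := by
        rw [← Real.exp_log h1, h, Real.exp_zero]
      have hq : c * dist x y /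
          Real.sqrt (Metric.infDist x (frontier G) * Metric.infDist y (frontier G)) = 0 := by
        linarith
      have : c * dist x y = 0 := by
        rcases div_eq_zero_iff.mp hq with h | h
        · exact h
        · exact absurd h hs.ne'
      have : dist x y = 0 := by
        rcases mul_eq_zero.1 this with h | h
        · exact absurd h hc0.ne'
        · exact h
      exact dist_eq_zero.1 this
    · intro h
      subst h
      simp [hDHVG]
  · intro x hx y hy
    unfold hDHVG
    rw [dist_comm, mul_comm (Metric.infDist x (frontier G))]
  · intro x hx y hy z hz
    set u := Metric.infDist x (frontier G) with hu
    set v := Metric.infDist y (frontier G) with hv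
    set t := Metric.infDist z (frontier G) with ht
    have hu0 : 0 < u := hδ x hx
    have hv0 : 0 < v := hδ y hy
    have ht0 : 0 < t := hδ z hz
    set P := Real.sqrt u with hP
    set Q := Real.sqrt v with hQ
    set T := Real.sqrt t with hT
    have hP0 : 0 < P := Real.sqrt_pos.2 hu0
    have hQ0 : 0 < Q := Real.sqrt_pos.2 hv0
    have hT0 : 0 < T := Real.sqrt_pos.2 ht0
    have hP2 : P ^ 2 = u := Real.sq_sqrt hu0.le
    have hQ2 : Q ^ 2 = v := Real.sq_sqrt hv0.le
    have hT2 : T ^ 2 = t := Real.sq_sqrt ht0.le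
    have e1 : Real.sqrt (u * v) = P * Q := Real.sqrt_mul hu0.le v
    have e2 : Real.sqrt (u * t) = P * T := Real.sqrt_mul hu0.le t
    have e3 : Real.sqrt (t * v) = T * Q := Real.sqrt_mul ht0.le v
    have hlip1 : T ^ 2 ≤ P ^ 2 + dist x z := by
      rw [hT2, hP2]
      calc t ≤ u + dist z x := Metric.infDist_le_infDist_add_dist
        _ = u + dist x z := by rw [dist_comm]
    have hlip2 : T ^ 2 ≤ Q ^ 2 + dist z y := by
      rw [hT2, hQ2]
      exact Metric.infDist_le_infDist_add_dist
    have hcore := core P Q T (dist x z) (dist z y) c (dist x y) hP0 hQ0 hT0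
      dist_nonneg dist_nonneg hc (dist_triangle x z y) hlip1 hlip2
    have hB : (0:ℝ) < 1 + c * dist x z / (P * T) := by positivity
    have hC : (0:ℝ) < 1 + c * dist z y / (T * Q) := by positivity
    have hA : (0:ℝ) < 1 + c * dist x y / (P * Q) := by positivity
    unfold hDHVG
    rw [← hu, ← hv, ← ht, e1, e2, e3]
    calc Real.log (1 + c * dist x y / (P * Q))
        ≤ Real.log ((1 + c * dist x z / (P * T)) * (1 + c * dist z y / (T * Q))) :=
          Real.log_le_log hA hcore
      _ = _ := Real.log_mul hB.ne' hC.ne'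
end

section
/- Let (X,d) be a metric space, M a nonempty proper closed subset of X, F : X∖M → (0,∞) a 1-Lipschitz function, and c > 0. Then the generalized Dovgoshey–Hariri–Vuorinen function h_c(x,y) = log(1 + c·d(x,y)/√(F(x)·F(y))) satisfies the Gromov hyperbolicity condition with Gromov constant δ ≤ log(2 + 1/c): for all x,y,z,w ∈ X∖M, h_c(x,z) + h_c(y,w) ≤ max{ h_c(x,w) + h_c(y,z), h_c(x,y) + h_c(z,w) } + 2·log((2c+1)/c). -/
open Real Filter

/-
With `r = √F`, the Lipschitz condition gives `(r a - r b)² ≤ |F a - F b| ≤ d(a, b)`, and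
`exp (h_c(a, b)) = D(a, b) / (r a * r b)` where `D(a, b) = c d(a, b) + r a * r b`. In each of the
three sums the denominators multiply to `r x * r y * r z * r w`, so the claim becomes
`D(x,z) D(y,w) ≤ K² max (D(x,w) D(y,z)) (D(x,y) D(z,w))` with `K = (2c + 1) / c ≥ 2`.
This follows from the Ptolemy-type inequality
`c D(x,z) D(y,w) ≤ (2c + 1) (D(x,y) D(z,w) + D(y,z) D(x,w))`,
since the sum is at most twice the maximum and `2K ≤ K²`.
-/

theorem sq_sub_le_abs_sq_sub {a b : ℝ} (ha : 0 ≤ a) (hb : 0 ≤ b) :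
    (a - b) ^ 2 ≤ |a ^ 2 - b ^ 2| :=
  calc (a - b) ^ 2 = |a - b| * |a - b| := by rw [abs_mul_abs_self, sq]
    _ ≤ (a + b) * |a - b| :=
      mul_le_mul_of_nonneg_right (abs_le.2 ⟨by linarith, by linarith⟩) (abs_nonneg _)
    _ = |a ^ 2 - b ^ 2| := by rw [sq_sub_sq, abs_mul, abs_of_nonneg (add_nonneg ha hb)]

section Quadrilateral

variable {X : Type*} [PseudoMetricSpace X] {r : X → ℝ}

theorem mul_dist_le_two_mul_of_le {x y z w : X}
    (h₁ : dist x y + dist y z ≤ dist z w + dist x w)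
    (h₂ : dist x y + dist x w ≤ dist y z + dist z w) :
    dist x z * dist y w ≤ 2 * (dist x y * dist z w + dist y z * dist x w) := by
  have he : dist x z ≤ dist x y + dist y z := dist_triangle x y z
  have hg : dist y w ≤ dist x y + dist x w := dist_triangle_left y w x
  have hprod := mul_le_mul he hg dist_nonneg (by positivity)
  have hxy : 0 ≤ dist x y := dist_nonneg
  rcases le_total (dist x w) (dist y z) with h | h
  · nlinarith [mul_nonneg hxy (sub_nonneg.2 h₁),
      mul_nonneg (sub_nonneg.2 h) (add_nonneg hxy (dist_nonneg (x := x) (y := w))),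
      sq_nonneg (dist x y - dist x w)]
  · nlinarith [mul_nonneg hxy (sub_nonneg.2 h₂),
      mul_nonneg (sub_nonneg.2 h) (add_nonneg hxy (dist_nonneg (x := y) (y := z))),
      sq_nonneg (dist x y - dist y z)]

theorem dist_mul_add_dist_mul_le_of_le (hr₀ : ∀ a, 0 ≤ r a)
    (hr : ∀ a b, (r a - r b) ^ 2 ≤ dist a b) {x y z w : X}
    (h₁ : dist x y + dist y z ≤ dist z w + dist x w)
    (h₂ : dist x y + dist x w ≤ dist y z + dist z w) :
    dist x z * (r y * r w) + dist y w * (r x * r z) ≤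
      dist x y * dist z w + dist y z * dist x w + 2 * (dist x y * (r z * r w) +
        dist y z * (r x * r w) + dist z w * (r x * r y) + dist x w * (r y * r z)) := by
  have he : dist x z ≤ dist x y + dist y z := dist_triangle x y z
  have hg : dist y w ≤ dist x y + dist x w := dist_triangle_left y w x
  have := hr x y; have := hr y z; have := hr z w; have := hr x w
  have := hr₀ x; have := hr₀ y; have := hr₀ z; have := hr₀ w
  nlinarith [mul_le_mul_of_nonneg_right he (mul_nonneg (hr₀ y) (hr₀ w)),
    mul_le_mul_of_nonneg_right hg (mul_nonneg (hr₀ x) (hr₀ z)),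
    mul_nonneg (sub_nonneg.2 (hr y z)) (sub_nonneg.2 (hr x w)),
    mul_nonneg (sub_nonneg.2 (hr x y)) (sub_nonneg.2 (hr z w)),
    mul_nonneg (sub_nonneg.2 h₂) (sq_nonneg (r x)),
    mul_nonneg (sub_nonneg.2 h₁) (sq_nonneg (r y)),
    mul_nonneg (sub_nonneg.2 (hr y z)) (sq_nonneg (r x)),
    mul_nonneg (sub_nonneg.2 (hr z w)) (sq_nonneg (r x)),
    mul_nonneg (sub_nonneg.2 (hr z w)) (sq_nonneg (r y)),
    mul_nonneg (sub_nonneg.2 (hr x w)) (sq_nonneg (r y)),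
    mul_nonneg (sub_nonneg.2 (hr x y)) (sq_nonneg (r z)),
    mul_nonneg (sub_nonneg.2 (hr x w)) (sq_nonneg (r z)),
    mul_nonneg (sub_nonneg.2 (hr x y)) (sq_nonneg (r w)),
    mul_nonneg (sub_nonneg.2 (hr y z)) (sq_nonneg (r w)),
    mul_nonneg (mul_nonneg (hr₀ x) (hr₀ y)) (sq_nonneg (r z - r w)),
    mul_nonneg (mul_nonneg (hr₀ x) (hr₀ w)) (sq_nonneg (r y - r z)),
    mul_nonneg (mul_nonneg (hr₀ z) (hr₀ w)) (sq_nonneg (r x - r y)),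
    mul_nonneg (mul_nonneg (hr₀ y) (hr₀ z)) (sq_nonneg (r x - r w)),
    sq_nonneg (r y - r w), sq_nonneg (r x - r z)]

/- In powers of `c`, the two sides differ by `c³` times the relaxed Ptolemy inequality, `c²` times
the inequality above, and terms that are nonnegative. -/
theorem weighted_ptolemy_of_le {c : ℝ} (hc : 0 ≤ c) (hr₀ : ∀ a, 0 ≤ r a)
    (hr : ∀ a b, (r a - r b) ^ 2 ≤ dist a b) {x y z w : X}
    (h₁ : dist x y + dist y z ≤ dist z w + dist x w)
    (h₂ : dist x y + dist x w ≤ dist y z + dist z w) :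
    c * ((c * dist x z + r x * r z) * (c * dist y w + r y * r w)) ≤
      (2 * c + 1) * ((c * dist x y + r x * r y) * (c * dist z w + r z * r w) +
        (c * dist y z + r y * r z) * (c * dist x w + r x * r w)) := by
  have hcubic := mul_le_mul_of_nonneg_left (mul_dist_le_two_mul_of_le h₁ h₂) (pow_nonneg hc 3)
  have hquadratic :=
    mul_le_mul_of_nonneg_left (dist_mul_add_dist_mul_le_of_le hr₀ hr h₁ h₂) (pow_nonneg hc 2)
  have := hr₀ x; have := hr₀ y; have := hr₀ z; have := hr₀ w
  have hr₄ : 0 ≤ r x * r y * r z * r w := by positivity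
  have hlinear : 0 ≤ c * (dist x y * (r z * r w) + dist y z * (r x * r w) +
      dist z w * (r x * r y) + dist x w * (r y * r z)) := by positivity
  linarith [mul_nonneg hc hr₄]

/- Each case is brought to the first one by a symmetry of the quadrilateral `xyzw`: it permutes the
sides and preserves the pair of diagonals `xz`, `yw`. -/
theorem weighted_ptolemy {c : ℝ} (hc : 0 ≤ c) (hr₀ : ∀ a, 0 ≤ r a)
    (hr : ∀ a b, (r a - r b) ^ 2 ≤ dist a b) (x y z w : X) :
    c * ((c * dist x z + r x * r z) * (c * dist y w + r y * r w)) ≤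
      (2 * c + 1) * ((c * dist x y + r x * r y) * (c * dist z w + r z * r w) +
        (c * dist y z + r y * r z) * (c * dist x w + r x * r w)) := by
  rcases le_total (dist x y + dist y z) (dist z w + dist x w) with h₁ | h₁ <;>
    rcases le_total (dist x y + dist x w) (dist y z + dist z w) with h₂ | h₂
  · exact weighted_ptolemy_of_le hc hr₀ hr h₁ h₂
  · have := weighted_ptolemy_of_le hc hr₀ hr (x := z) (y := y) (z := x) (w := w) ?_ ?_
    all_goals simp only [dist_comm] at *; linarith
  · have := weighted_ptolemy_of_le hc hr₀ hr (x := x) (y := w) (z := z) (w := y) ?_ ?_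
    all_goals simp only [dist_comm] at *; linarith
  · have := weighted_ptolemy_of_le hc hr₀ hr (x := z) (y := w) (z := x) (w := y) ?_ ?_
    all_goals simp only [dist_comm] at *; linarith

end Quadrilateral

theorem log_le_max_log_add {c P Q R : ℝ} (hc : 0 < c) (hP : 0 < P) (hQ : 0 < Q)
    (h : c * P ≤ (2 * c + 1) * (Q + R)) :
    log P ≤ max (log Q) (log R) + 2 * log ((2 * c + 1) / c) := by
  set K := (2 * c + 1) / c
  have hcK : c * K = 2 * c + 1 := mul_div_cancel₀ _ hc.ne'
  have hK : 2 ≤ K := by rw [le_div_iff₀ hc]; linarith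
  have hmax : 0 < max Q R := lt_max_of_lt_left hQ
  have hP_le : P ≤ K ^ 2 * max Q R := by
    rw [← mul_le_mul_iff_right₀ hc]
    calc c * P ≤ (2 * c + 1) * (2 * max Q R) := by
          refine h.trans (by gcongr; linarith [le_max_left Q R, le_max_right Q R])
      _ = c * (2 * K * max Q R) := by rw [← hcK]; ring
      _ ≤ c * (K ^ 2 * max Q R) := by gcongr; nlinarith
  calc log P ≤ log (K ^ 2 * max Q R) := log_le_log hP hP_le
    _ = log (max Q R) + 2 * log K := by
      rw [log_mul (by positivity) hmax.ne', log_pow]; push_cast; ring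
    _ ≤ max (log Q) (log R) + 2 * log K := by
      gcongr
      rcases le_total Q R with h | h
      · rw [max_eq_right h]; exact le_max_right _ _
      · rw [max_eq_left h]; exact le_max_left _ _

theorem hDHV_eq {X : Type*} [MetricSpace X] {c : ℝ} (hc : 0 ≤ c) {F : X → ℝ} {x y : X}
    (hx : 0 < F x) (hy : 0 < F y) :
    hDHV c F x y = log (c * dist x y + √(F x) * √(F y)) - log √(F x) - log √(F y) := by
  have hxy : 0 < √(F x) * √(F y) := by positivity
  rw [hDHV, sqrt_mul hx.le, sub_sub, ← log_mul (by positivity) (by positivity),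
    ← log_div (by positivity) hxy.ne']
  congr 1
  field_simp
  ring

theorem stmt_7_general {X : Type*} [MetricSpace X] (M : Set X)
    (F : X → ℝ) (hFpos : ∀ x ∉ M, 0 < F x)
    (hFlip : ∀ x ∉ M, ∀ y ∉ M, |F x - F y| ≤ dist x y)
    (c : ℝ) (hc : 0 < c) :
    ∀ x ∉ M, ∀ y ∉ M, ∀ z ∉ M, ∀ w ∉ M,
      hDHV c F x z + hDHV c F y w ≤
        max (hDHV c F x w + hDHV c F y z) (hDHV c F x y + hDHV c F z w) +
          2 * Real.log ((2 * c + 1) / c) := by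
  intro x hx y hy z hz w hw
  have hr : ∀ a b : ↥Mᶜ, (√(F a) - √(F b)) ^ 2 ≤ dist a b := fun a b =>
    (sq_sub_le_abs_sq_sub (sqrt_nonneg _) (sqrt_nonneg _)).trans <| by
      rw [sq_sqrt (hFpos a a.2).le, sq_sqrt (hFpos b b.2).le]
      exact hFlip a a.2 b b.2
  have hD : ∀ a ∉ M, ∀ b ∉ M, 0 < c * dist a b + √(F a) * √(F b) := fun a ha b hb => by
    have := hFpos a ha; have := hFpos b hb; positivity
  have hlog := log_le_max_log_add
    (R := (c * dist y z + √(F y) * √(F z)) * (c * dist x w + √(F x) * √(F w))) hc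
    (mul_pos (hD x hx z hz) (hD y hy w hw)) (mul_pos (hD x hx y hy) (hD z hz w hw))
    (weighted_ptolemy (X := ↥Mᶜ) hc.le (fun a => sqrt_nonneg (F a)) hr
      ⟨x, hx⟩ ⟨y, hy⟩ ⟨z, hz⟩ ⟨w, hw⟩)
  rw [log_mul (hD x hx z hz).ne' (hD y hy w hw).ne', log_mul (hD x hx y hy).ne' (hD z hz w hw).ne',
    log_mul (hD y hy z hz).ne' (hD x hx w hw).ne'] at hlog
  have hDHV_xy := fun a (ha : a ∉ M) b (hb : b ∉ M) => hDHV_eq hc.le (hFpos a ha) (hFpos b hb)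
  rw [hDHV_xy x hx z hz, hDHV_xy y hy w hw, hDHV_xy x hx w hw, hDHV_xy y hy z hz,
    hDHV_xy x hx y hy, hDHV_xy z hz w hw]
  rw [← max_add_add_right, le_max_iff] at hlog ⊢
  rcases hlog with h | h
  · right; linarith
  · left; linarith

theorem stmt_7 {X : Type*} [MetricSpace X] (M : Set X)
    (hMclosed : IsClosed M) (hMne : M.Nonempty) (hMproper : M ≠ Set.univ)
    (F : X → ℝ) (hFpos : ∀ x ∉ M, 0 < F x)
    (hFlip : ∀ x ∉ M, ∀ y ∉ M, |F x - F y| ≤ dist x y)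
    (c : ℝ) (hc : 0 < c) :
    ∀ x ∉ M, ∀ y ∉ M, ∀ z ∉ M, ∀ w ∉ M,
      hDHV c F x z + hDHV c F y w ≤
        max (hDHV c F x w + hDHV c F y z) (hDHV c F x y + hDHV c F z w) +
          2 * Real.log ((2 * c + 1) / c) :=
  stmt_7_general M F hFpos hFlip c hc
end

section
/- Let (X,d) be a metric space, M a nonempty proper closed subset of X, F : X∖M → (0,∞) a 1-Lipschitz function, and c > 0. Define λ(x,y) = c·d(x,y) + √(F(x)·F(y)) for x,y ∈ X∖M. Then for all x,y,z ∈ X∖M, λ(x,y) ≤ ((2c+1)/(2c))·(λ(x,z) + λ(z,y)); in particular λ(x,y) ≤ ((2c+1)/c)·max{ λ(x,z), λ(z,y) }. -/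
open Real Filter

/-- The auxiliary function `λ(x,y) = c·d(x,y) + √(F(x)·F(y))`. -/
noncomputable def lamDHV {X : Type*} [MetricSpace X] (c : ℝ) (F : X → ℝ) (x y : X) : ℝ :=
  c * dist x y + Real.sqrt (F x * F y)

lemma key_dhv (a b e s t : ℝ) (ha : 0 ≤ a) (hb : 0 ≤ b) (he : 0 ≤ e)
    (hs : 0 ≤ s) (ht : 0 ≤ t) (h1 : a^2 ≤ e^2 + s) (h2 : b^2 ≤ e^2 + t) :
    a * b ≤ (s + t) / 2 + e * a + e * b := by
  rcases le_or_gt e a with h | h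
  · rcases le_or_gt e b with h' | h'
    · nlinarith [sq_nonneg (a - b), mul_nonneg he he]
    · nlinarith [mul_nonneg he ha]
  · nlinarith [mul_nonneg he hb]

theorem stmt_8 {X : Type*} [MetricSpace X] (M : Set X)
    (hMclosed : IsClosed M) (hMne : M.Nonempty) (hMproper : M ≠ Set.univ)
    (F : X → ℝ) (hFpos : ∀ x ∉ M, 0 < F x)
    (hFlip : ∀ x ∉ M, ∀ y ∉ M, |F x - F y| ≤ dist x y)
    (c : ℝ) (hc : 0 < c) :
    ∀ x ∉ M, ∀ y ∉ M, ∀ z ∉ M,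
      lamDHV c F x y ≤ ((2 * c + 1) / (2 * c)) * (lamDHV c F x z + lamDHV c F z y) ∧
      lamDHV c F x y ≤ ((2 * c + 1) / c) * max (lamDHV c F x z) (lamDHV c F z y) := by
  intro x hx y hy z hz
  have hFx := hFpos x hx
  have hFy := hFpos y hy
  have hFz := hFpos z hz
  set a := Real.sqrt (F x) with ha
  set b := Real.sqrt (F y) with hb
  set e := Real.sqrt (F z) with he
  have ha0 : 0 ≤ a := Real.sqrt_nonneg _
  have hb0 : 0 ≤ b := Real.sqrt_nonneg _
  have he0 : 0 ≤ e := Real.sqrt_nonneg _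
  have hxz : F x ≤ F z + dist x z := by
    have := abs_le.mp (hFlip x hx z hz); linarith [this.2]
  have hzy : F y ≤ F z + dist z y := by
    have := abs_le.mp (hFlip y hy z hz)
    have hd : dist y z = dist z y := dist_comm _ _
    linarith [this.2]
  have ha2 : a ^ 2 = F x := Real.sq_sqrt hFx.le
  have hb2 : b ^ 2 = F y := Real.sq_sqrt hFy.le
  have he2 : e ^ 2 = F z := Real.sq_sqrt hFz.le
  have hkey : a * b ≤ (dist x z + dist z y) / 2 + e * a + e * b :=
    key_dhv a b e (dist x z) (dist z y) ha0 hb0 he0 dist_nonneg dist_nonneg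
      (by rw [ha2, he2]; exact hxz) (by rw [hb2, he2]; exact hzy)
  have hsxy : Real.sqrt (F x * F y) = a * b := Real.sqrt_mul hFx.le _
  have hsxz : Real.sqrt (F x * F z) = a * e := Real.sqrt_mul hFx.le _
  have hszy : Real.sqrt (F z * F y) = e * b := Real.sqrt_mul hFz.le _
  have htri : dist x y ≤ dist x z + dist z y := dist_triangle x z y
  have hK : (2 * c + 1) / (2 * c) = 1 + 1 / (2 * c) := by field_simp
  have h1 : lamDHV c F x y ≤ ((2 * c + 1) / (2 * c)) * (lamDHV c F x z + lamDHV c F z y) := by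
    simp only [lamDHV, hsxy, hsxz, hszy, hK]
    have hc' : (0:ℝ) < 2 * c := by linarith
    have h2c : 1 / (2 * c) * (c * dist x z + c * dist z y) = (dist x z + dist z y) / 2 := by
      field_simp
    have hpos : 0 ≤ 1 / (2 * c) * (a * e + e * b) := by
      have : 0 ≤ a * e + e * b := by positivity
      positivity
    nlinarith [mul_le_mul_of_nonneg_left htri hc.le]
  refine ⟨h1, ?_⟩
  have hsum : lamDHV c F x z + lamDHV c F z y ≤
      2 * max (lamDHV c F x z) (lamDHV c F z y) := by
    have := le_max_left (lamDHV c F x z) (lamDHV c F z y)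
    have := le_max_right (lamDHV c F x z) (lamDHV c F z y)
    linarith
  have hKpos : 0 ≤ (2 * c + 1) / (2 * c) := by positivity
  calc lamDHV c F x y ≤ ((2 * c + 1) / (2 * c)) * (lamDHV c F x z + lamDHV c F z y) := h1
    _ ≤ ((2 * c + 1) / (2 * c)) * (2 * max (lamDHV c F x z) (lamDHV c F z y)) :=
        mul_le_mul_of_nonneg_left hsum hKpos
    _ = ((2 * c + 1) / c) * max (lamDHV c F x z) (lamDHV c F z y) := by
        field_simp
end

section
/- Let (X,d) be a metric space, M a nonempty proper closed subset of X, F : X∖M → (0,∞) a 1-Lipschitz function, and c ≥ 2, so that h_c(x,y) = log(1 + c·d(x,y)/√(F(x)·F(y))) is a metric on X∖M. Then the identity map 1 : (X∖M, d) → (X∖M, h_c) is a homeomorphism, and it is 1-quasiconformal: for every x ∈ X∖M, limsup_{r→0⁺} [ sup{ h_c(x,y) : y ∈ X∖M, d(x,y) ≤ r } / inf{ h_c(x,y) : y ∈ X∖M, d(x,y) ≥ r } ] ≤ 1. -/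
open Real Filter

/-!
Fix `x ∉ M` and put `a = F x`, `d = dist x y`. The Lipschitz bound `|F x - F y| ≤ d` gives
`a - d ≤ √(F x F y) ≤ a + d`, hence `log (1 + c d / (a + d)) ≤ h_c(x, y) ≤ c d / (a - d)`
for `d < a`; both bounds tend to `0` exactly when `d` does, which gives the homeomorphism.
For `0 < r < a` the supremum over `d ≤ r` is at most `c r / (a - r)`, while by
`log (1 + t) ≥ 2t / (t + 2)` the infimum over `d ≥ r` is at least `2t / (t + 2)` with
`t = c r / (a + r)`. The quotient of these bounds is `(2a + (2 + c) r) / (2 (a - r))`,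
which tends to `1` as `r → 0`.
-/

section

variable {X : Type*} [MetricSpace X] {F : X → ℝ} {c : ℝ} {x y : X}

lemma hDHV_comm (c : ℝ) (F : X → ℝ) (x y : X) : hDHV c F x y = hDHV c F y x := by
  rw [hDHV, hDHV, dist_comm, mul_comm (F x)]

lemma hDHV_nonneg (hc : 0 ≤ c) (x y : X) : 0 ≤ hDHV c F x y :=
  Real.log_nonneg (le_add_of_nonneg_right (by positivity))

lemma sqrt_mul_le_add_dist (hx : 0 ≤ F x) (hy : 0 ≤ F y) (hlip : |F x - F y| ≤ dist x y) :
    √(F x * F y) ≤ F x + dist x y := by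
  have hy' : F y ≤ F x + dist x y := by linarith [abs_le.1 hlip]
  rw [Real.sqrt_le_left (by positivity)]
  nlinarith [dist_nonneg (x := x) (y := y)]

lemma sub_dist_le_sqrt_mul (hlip : |F x - F y| ≤ dist x y) :
    F x - dist x y ≤ √(F x * F y) := by
  rcases le_or_gt (F x - dist x y) 0 with h | h
  · exact h.trans (Real.sqrt_nonneg _)
  have hy : F x - dist x y ≤ F y := by linarith [abs_le.1 hlip]
  rw [Real.le_sqrt' h]
  nlinarith [dist_nonneg (x := x) (y := y)]

lemma hDHV_le (hc : 0 ≤ c) (hlip : |F x - F y| ≤ dist x y) {r : ℝ} (hr : dist x y ≤ r)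
    (hrF : r < F x) : hDHV c F x y ≤ c * r / (F x - r) := calc
  hDHV c F x y ≤ c * dist x y / √(F x * F y) := by
    rw [hDHV, add_comm]; exact Real.log_le_sub_one_of_pos (by positivity) |>.trans_eq (by ring)
  _ ≤ c * r / (F x - r) := by
    gcongr
    · exact mul_nonneg hc (dist_nonneg.trans hr)
    · linarith [sub_dist_le_sqrt_mul hlip]

lemma log_one_add_le_hDHV (hc : 0 ≤ c) (hx : 0 < F x) (hy : 0 < F y)
    (hlip : |F x - F y| ≤ dist x y) {r : ℝ} (hr : 0 ≤ r) (hrd : r ≤ dist x y) :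
    log (1 + c * r / (F x + r)) ≤ hDHV c F x y := by
  have hmono : c * r / (F x + r) ≤ c * dist x y / (F x + dist x y) := by
    rw [div_le_div_iff₀ (by positivity) (by positivity)]
    nlinarith [mul_le_mul_of_nonneg_left hrd (mul_nonneg hc hx.le)]
  have hsqrt : c * dist x y / (F x + dist x y) ≤ c * dist x y / √(F x * F y) :=
    div_le_div_of_nonneg_left (by positivity) (by positivity)
      (sqrt_mul_le_add_dist hx.le hy.le hlip)
  exact Real.log_le_log (by positivity) (by linarith)

lemma tendsto_zero_of_tendsto_mul_div_add {ι : Type*} {l : Filter ι} {a c : ℝ} (ha : 0 < a)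
    (hc : 0 < c) {d : ι → ℝ} (hd : ∀ i, 0 ≤ d i)
    (h : Tendsto (fun i => c * d i / (a + d i)) l (nhds 0)) : Tendsto d l (nhds 0) := by
  have hinv : ∀ i, a * (c * d i / (a + d i)) / (c - c * d i / (a + d i)) = d i := by
    intro i
    have : 0 < a + d i := by linarith [hd i]
    field_simp
    rw [add_sub_cancel_right, mul_div_cancel_left₀ _ ha.ne']
  have := (h.const_mul a).div (tendsto_const_nhds.sub h) (by simpa using hc.ne')
  rw [mul_zero, zero_div] at this
  exact this.congr hinv

lemma tendsto_dist_iff_tendsto_hDHV {ι : Type*} {l : Filter ι} (hc : 0 < c) (hx : 0 < F x)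
    {u : ι → X} (hu : ∀ i, 0 < F (u i)) (hlip : ∀ i, |F x - F (u i)| ≤ dist x (u i)) :
    Tendsto (fun i => dist (u i) x) l (nhds 0) ↔
      Tendsto (fun i => hDHV c F (u i) x) l (nhds 0) := by
  rw [show (fun i => dist (u i) x) = fun i => dist x (u i) from funext fun i => dist_comm _ _,
    show (fun i => hDHV c F (u i) x) = fun i => hDHV c F x (u i) from
      funext fun i => hDHV_comm _ _ _ _]
  constructor
  · intro hd
    have hbound : Tendsto (fun i => c * dist x (u i) / (F x - dist x (u i))) l (nhds 0) := by
      have := (hd.const_mul c).div (tendsto_const_nhds.sub hd) (by simpa using hx.ne')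
      rwa [mul_zero, zero_div] at this
    refine squeeze_zero' (Eventually.of_forall fun i => hDHV_nonneg hc.le _ _) ?_ hbound
    filter_upwards [hd.eventually (gt_mem_nhds hx)] with i hi
    exact hDHV_le hc.le (hlip i) le_rfl hi
  · intro hh
    refine tendsto_zero_of_tendsto_mul_div_add hx hc (fun _ => dist_nonneg) ?_
    have hexp : Tendsto (fun i => exp (hDHV c F x (u i)) - 1) l (nhds 0) := by
      simpa using ((continuous_exp.tendsto 0).comp hh).sub_const 1
    refine squeeze_zero (fun i => by positivity) (fun i => ?_) hexp
    have := log_one_add_le_hDHV hc.le hx (hu i) (hlip i) dist_nonneg le_rfl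
    rw [Real.log_le_iff_le_exp (by positivity)] at this
    linarith

/-- `H_f(x, r)` for the identity map `(X∖M, d) → (X∖M, h_c)`. -/
noncomputable def hDHVDistortion (M : Set X) (c : ℝ) (F : X → ℝ) (x : X) (r : ℝ) : ℝ :=
  sSup (hDHV c F x '' {y | y ∉ M ∧ dist x y ≤ r}) /
    sInf (hDHV c F x '' {y | y ∉ M ∧ r ≤ dist x y})

variable {M : Set X}

lemma hDHVDistortion_nonneg (hc : 0 ≤ c) (r : ℝ) : 0 ≤ hDHVDistortion M c F x r :=
  div_nonneg (Real.sSup_nonneg <| by rintro _ ⟨y, -, rfl⟩; exact hDHV_nonneg hc x y)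
    (Real.sInf_nonneg <| by rintro _ ⟨y, -, rfl⟩; exact hDHV_nonneg hc x y)

lemma sSup_hDHV_le (hc : 0 ≤ c) (hFlip : ∀ y ∉ M, |F x - F y| ≤ dist x y) {r : ℝ}
    (hr : 0 ≤ r) (hrF : r < F x) :
    sSup (hDHV c F x '' {y | y ∉ M ∧ dist x y ≤ r}) ≤ c * r / (F x - r) :=
  Real.sSup_le (by rintro _ ⟨y, ⟨hy, hyr⟩, rfl⟩; exact hDHV_le hc (hFlip y hy) hyr hrF)
    (div_nonneg (mul_nonneg hc hr) (by linarith))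

lemma log_one_add_le_sInf_hDHV (hc : 0 ≤ c) (hx : 0 < F x) (hFpos : ∀ y ∉ M, 0 < F y)
    (hFlip : ∀ y ∉ M, |F x - F y| ≤ dist x y) {r : ℝ} (hr : 0 ≤ r)
    (hne : {y | y ∉ M ∧ r ≤ dist x y}.Nonempty) :
    log (1 + c * r / (F x + r)) ≤ sInf (hDHV c F x '' {y | y ∉ M ∧ r ≤ dist x y}) :=
  le_csInf (hne.image _) <| by
    rintro _ ⟨y, ⟨hy, hry⟩, rfl⟩
    exact log_one_add_le_hDHV hc hx (hFpos y hy) (hFlip y hy) hr hry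

lemma hDHVDistortion_le (hc : 0 < c) (hx : 0 < F x) (hFpos : ∀ y ∉ M, 0 < F y)
    (hFlip : ∀ y ∉ M, |F x - F y| ≤ dist x y) {r : ℝ} (hr : 0 < r) (hrF : r < F x) :
    hDHVDistortion M c F x r ≤ (2 * F x + (2 + c) * r) / (2 * (F x - r)) := by
  have hxr : 0 < F x - r := by linarith
  rcases Set.eq_empty_or_nonempty {y | y ∉ M ∧ r ≤ dist x y} with hS | hS
  · -- `sInf ∅ = 0`, so the quotient is `0`
    rw [hDHVDistortion, hS, Set.image_empty, Real.sInf_empty, div_zero]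
    positivity
  set t := c * r / (F x + r)
  have ht : 0 < t := by positivity
  have hinf : 2 * t / (t + 2) ≤ sInf (hDHV c F x '' {y | y ∉ M ∧ r ≤ dist x y}) :=
    (le_log_one_add_of_nonneg ht.le).trans (log_one_add_le_sInf_hDHV hc.le hx hFpos hFlip hr.le hS)
  calc hDHVDistortion M c F x r ≤ (c * r / (F x - r)) / (2 * t / (t + 2)) :=
        div_le_div₀ (by positivity) (sSup_hDHV_le hc.le hFlip hr.le hrF) (by positivity) hinf
    _ = (2 * F x + (2 + c) * r) / (2 * (F x - r)) := by
        simp only [t]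
        field_simp
        ring

lemma limsup_hDHVDistortion_le_one (hc : 0 < c) (hx : 0 < F x) (hFpos : ∀ y ∉ M, 0 < F y)
    (hFlip : ∀ y ∉ M, |F x - F y| ≤ dist x y) :
    limsup (hDHVDistortion M c F x) (nhdsWithin 0 (Set.Ioi 0)) ≤ 1 := by
  set g : ℝ → ℝ := fun r => (2 * F x + (2 + c) * r) / (2 * (F x - r))
  have hg : Tendsto g (nhdsWithin 0 (Set.Ioi 0)) (nhds 1) := by
    have : Tendsto g (nhds 0) (nhds ((2 * F x + (2 + c) * 0) / (2 * (F x - 0)))) :=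
      (tendsto_const_nhds.add (tendsto_const_nhds.mul tendsto_id)).div
        (tendsto_const_nhds.mul (tendsto_const_nhds.sub tendsto_id)) (by simpa using hx.ne')
    rw [show (2 * F x + (2 + c) * 0) / (2 * (F x - 0)) = 1 by
      rw [mul_zero, add_zero, sub_zero, div_self (by positivity)]] at this
    exact this.mono_left nhdsWithin_le_nhds
  have hbound : ∀ᶠ r in nhdsWithin 0 (Set.Ioi 0), hDHVDistortion M c F x r ≤ g r := by
    filter_upwards [Ioo_mem_nhdsGT hx] with r ⟨hr, hrF⟩
    exact hDHVDistortion_le hc hx hFpos hFlip hr hrF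
  calc limsup (hDHVDistortion M c F x) (nhdsWithin 0 (Set.Ioi 0))
      ≤ limsup g (nhdsWithin 0 (Set.Ioi 0)) :=
        limsup_le_limsup hbound (isCoboundedUnder_le_of_le _ (hDHVDistortion_nonneg hc.le))
          hg.isBoundedUnder_le
    _ = 1 := hg.limsup_eq

end

theorem stmt_9_general {X : Type*} [MetricSpace X] (M : Set X)
    (F : X → ℝ) (hFpos : ∀ x ∉ M, 0 < F x)
    (hFlip : ∀ x ∉ M, ∀ y ∉ M, |F x - F y| ≤ dist x y)
    (c : ℝ) (hc : 2 ≤ c) :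
    -- the identity map `(X∖M, d) → (X∖M, h_c)` is a homeomorphism
    (∀ x ∉ M, ∀ u : ℕ → X, (∀ n, u n ∉ M) →
      (Tendsto (fun n => dist (u n) x) atTop (nhds 0) ↔
        Tendsto (fun n => hDHV c F (u n) x) atTop (nhds 0))) ∧
    -- and it is 1-quasiconformal
    (∀ x ∉ M,
      Filter.limsup
        (fun r : ℝ =>
          sSup ((fun y => hDHV c F x y) '' {y | y ∉ M ∧ dist x y ≤ r}) /
          sInf ((fun y => hDHV c F x y) '' {y | y ∉ M ∧ r ≤ dist x y}))
        (nhdsWithin (0 : ℝ) (Set.Ioi 0)) ≤ 1) :=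
  ⟨fun x hx _ hu => tendsto_dist_iff_tendsto_hDHV (by linarith) (hFpos x hx)
      (fun n => hFpos _ (hu n)) (fun n => hFlip x hx _ (hu n)),
    fun x hx => limsup_hDHVDistortion_le_one (by linarith) (hFpos x hx) hFpos (hFlip x hx)⟩

theorem stmt_9 {X : Type*} [MetricSpace X] (M : Set X)
    (hMclosed : IsClosed M) (hMne : M.Nonempty) (hMproper : M ≠ Set.univ)
    (F : X → ℝ) (hFpos : ∀ x ∉ M, 0 < F x)
    (hFlip : ∀ x ∉ M, ∀ y ∉ M, |F x - F y| ≤ dist x y)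
    (c : ℝ) (hc : 2 ≤ c) :
    -- the identity map `(X∖M, d) → (X∖M, h_c)` is a homeomorphism
    (∀ x ∉ M, ∀ u : ℕ → X, (∀ n, u n ∉ M) →
      (Tendsto (fun n => dist (u n) x) atTop (nhds 0) ↔
        Tendsto (fun n => hDHV c F (u n) x) atTop (nhds 0))) ∧
    -- and it is 1-quasiconformal
    (∀ x ∉ M,
      Filter.limsup
        (fun r : ℝ =>
          sSup ((fun y => hDHV c F x y) '' {y | y ∉ M ∧ dist x y ≤ r}) /
          sInf ((fun y => hDHV c F x y) '' {y | y ∉ M ∧ r ≤ dist x y}))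
        (nhdsWithin (0 : ℝ) (Set.Ioi 0)) ≤ 1) :=
  stmt_9_general M F hFpos hFlip c hc
end

section
/- Let (X,d) be a metric space, M a nonempty proper closed subset of X, and F : X∖M → (0,∞) any positive function. Then the function μ defined by μ(x,y) = d(x,y) + max{F(x), F(y)} for x,y ∈ X∖M satisfies the triangle inequality μ(x,y) ≤ μ(x,z) + μ(z,y) for all x,y,z ∈ X∖M, and moreover for all x,y,z,w ∈ X∖M with μ(x,w) ≤ min{ μ(x,y), μ(y,z), μ(z,w) } one has μ(x,z)·μ(y,w) ≤ 4·μ(z,w)·μ(x,y). -/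
open Real Filter

/-- The auxiliary function `μ(x,y) = d(x,y) + max{F(x), F(y)}`. -/
noncomputable def muIb {X : Type*} [MetricSpace X] (F : X → ℝ) (x y : X) : ℝ :=
  dist x y + max (F x) (F y)

theorem stmt_16 {X : Type*} [MetricSpace X] (M : Set X)
    (hMclosed : IsClosed M) (hMne : M.Nonempty) (hMproper : M ≠ Set.univ)
    (F : X → ℝ) (hFpos : ∀ x ∉ M, 0 < F x) :
    (∀ x ∉ M, ∀ y ∉ M, ∀ z ∉ M, muIb F x y ≤ muIb F x z + muIb F z y) ∧
    (∀ x ∉ M, ∀ y ∉ M, ∀ z ∉ M, ∀ w ∉ M,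
      muIb F x w ≤ min (min (muIb F x y) (muIb F y z)) (muIb F z w) →
      muIb F x z * muIb F y w ≤ 4 * (muIb F z w * muIb F x y)) := by
  have symm : ∀ x y : X, muIb F x y = muIb F y x := by
    intro x y; unfold muIb; rw [dist_comm, max_comm]
  have tri : ∀ x ∉ M, ∀ y ∉ M, ∀ z ∉ M, muIb F x y ≤ muIb F x z + muIb F z y := by
    intro x hx y hy z hz
    unfold muIb
    have hd := dist_triangle x z y
    have hz' := hFpos z hz
    have h1 : max (F x) (F y) ≤ max (F x) (F z) + max (F z) (F y) := by
      rcases le_total (F x) (F y) with h | h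
      · calc max (F x) (F y) = F y := max_eq_right h
          _ ≤ max (F z) (F y) := le_max_right _ _
          _ ≤ max (F x) (F z) + max (F z) (F y) := by
              have : (0:ℝ) ≤ max (F x) (F z) := le_trans hz'.le (le_max_right _ _)
              linarith
      · calc max (F x) (F y) = F x := max_eq_left h
          _ ≤ max (F x) (F z) := le_max_left _ _
          _ ≤ max (F x) (F z) + max (F z) (F y) := by
              have : (0:ℝ) ≤ max (F z) (F y) := le_trans hz'.le (le_max_left _ _)
              linarith
    linarith
  have nonneg : ∀ x ∉ M, ∀ y ∉ M, 0 ≤ muIb F x y := by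
    intro x hx y hy
    unfold muIb
    have := dist_nonneg (x := x) (y := y)
    have := (hFpos x hx).le.trans (le_max_left (F x) (F y))
    linarith
  refine ⟨tri, ?_⟩
  intro x hx y hy z hz w hw h
  have h1 : muIb F x w ≤ muIb F x y := le_trans h (le_trans (min_le_left _ _) (min_le_left _ _))
  have h3 : muIb F x w ≤ muIb F z w := le_trans h (min_le_right _ _)
  have hxz : muIb F x z ≤ 2 * muIb F z w := by
    have := tri x hx z hz w hw
    rw [symm w z] at this
    linarith
  have hyw : muIb F y w ≤ 2 * muIb F x y := by
    have := tri y hy w hw x hx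
    rw [symm y x] at this
    linarith
  have n1 := nonneg x hx z hz
  have n2 := nonneg y hy w hw
  have n3 := nonneg z hz w hw
  have n4 := nonneg x hx y hy
  nlinarith [mul_le_mul hxz hyw n2 (by linarith : (0:ℝ) ≤ 2 * muIb F z w)]
end
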